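/- Let γ_n > 0 with γ_n → 0 and k_n → ∞ with √{k_n}·γ_n → ∞. Then (γ_n/√{k_n})·e^{-√{k_n}·γ_n}·( ∑_{j=1}^{k_n-1} e^{jγ_n/√{k_n}} − (√{k_n}/γ_n)·e^{√{k_n}·γ_n} ) → 0 as n → ∞. -/

import Mathlib

/-! With `x = γ/√k` the terms are the powers `(e^x)^j`, so the sum is
`(e^{kx} - e^x)/(e^x - 1)` and, as `kx = √k γ`, the normalized difference equals
`x/(e^x - 1) · (1 - e^{x - √k γ}) - 1`. Since `x → 0` and `√k γ → ∞`, the first factor tends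
to `1` and the exponential to `0`. -/

open Filter Topology Finset Real

lemma tendsto_div_exp_sub_one_nhdsNE_zero :
    Tendsto (fun t : ℝ => t / (exp t - 1)) (𝓝[≠] 0) (𝓝 1) := by
  have h := (hasDerivAt_exp 0).tendsto_slope_zero
  simp only [zero_add, exp_zero, smul_eq_mul] at h
  simpa [div_eq_inv_mul] using h.inv₀ one_ne_zero

lemma sum_Icc_exp_nat_mul {x : ℝ} (hx : x ≠ 0) {m : ℕ} (hm : 1 ≤ m) :
    ∑ j ∈ Icc 1 (m - 1), exp (j * x) = (exp (m * x) - exp x) / (exp x - 1) := by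
  have hIcc : Icc 1 (m - 1) = Ico 1 m := by
    ext j; simp only [mem_Icc, mem_Ico]; omega
  simp_rw [exp_nat_mul, hIcc]
  rw [geom_sum_Ico (by simpa using hx) hm, pow_one]

lemma mul_exp_neg_mul_sum_Icc_exp_sub {x : ℝ} (hx : x ≠ 0) {m : ℕ} (hm : 1 ≤ m) :
    x * exp (-(m * x)) * (∑ j ∈ Icc 1 (m - 1), exp (j * x) - exp (m * x) / x) =
      x / (exp x - 1) * (1 - exp (x - m * x)) - 1 := by
  have hex : exp x - 1 ≠ 0 := sub_ne_zero.mpr (by simpa using hx)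
  rw [sum_Icc_exp_nat_mul hx hm, exp_sub, exp_neg]
  field_simp

theorem tendsto_mul_exp_neg_mul_sum_Icc_exp_sub {α : Type*} {l : Filter α} {x : α → ℝ}
    {m : α → ℕ} (hx : Tendsto x l (𝓝[≠] 0)) (hmx : Tendsto (fun a => m a * x a) l atTop) :
    Tendsto (fun a => x a * exp (-(m a * x a)) *
      (∑ j ∈ Icc 1 (m a - 1), exp (j * x a) - exp (m a * x a) / x a)) l (𝓝 0) := by
  have hexp : Tendsto (fun a => exp (x a - m a * x a)) l (𝓝 0) :=
    tendsto_exp_atBot.comp <| (tendsto_nhds_of_tendsto_nhdsWithin hx).add_atBot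
      (tendsto_neg_atTop_atBot.comp hmx)
  have hlim := ((tendsto_div_exp_sub_one_nhdsNE_zero.comp hx).mul
    (tendsto_const_nhds (x := (1 : ℝ)).sub hexp)).sub_const 1
  rw [sub_zero, mul_one, sub_self] at hlim
  refine hlim.congr' ?_
  filter_upwards [eventually_mem_of_tendsto_nhdsWithin hx, hmx.eventually_gt_atTop 0]
    with a hxa hma
  have hm : 1 ≤ m a := Nat.one_le_iff_ne_zero.mpr fun h => by simp [h] at hma
  exact (mul_exp_neg_mul_sum_Icc_exp_sub hxa hm).symm

open Filter in
theorem geom_sum_leading_term_general (γ : ℕ → ℝ) (k : ℕ → ℕ)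
    (hγ0 : Tendsto γ atTop (nhds 0))
    (hk : Tendsto k atTop atTop)
    (hkγ : Tendsto (fun n => Real.sqrt (k n) * γ n) atTop atTop) :
    Tendsto (fun n => (γ n / Real.sqrt (k n)) * Real.exp (-(Real.sqrt (k n)) * γ n) *
        ((∑ j ∈ Finset.Icc 1 (k n - 1), Real.exp (j * γ n / Real.sqrt (k n))) -
          (Real.sqrt (k n) / γ n) * Real.exp (Real.sqrt (k n) * γ n)))
      atTop (nhds 0) := by
  have hx0 : Tendsto (fun n => γ n / √(k n)) atTop (𝓝 0) := by
    simpa [div_eq_mul_inv] using hγ0.mul (tendsto_inv_atTop_zero.comp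
      (tendsto_sqrt_atTop.comp (tendsto_natCast_atTop_atTop.comp hk)))
  have hx_ne : ∀ᶠ n in atTop, γ n / √(k n) ≠ 0 := by
    filter_upwards [hkγ.eventually_ne_atTop 0] with n hn
    obtain ⟨hs, hg⟩ := mul_ne_zero_iff.mp hn
    exact div_ne_zero hg hs
  have hkx : ∀ n, (k n : ℝ) * (γ n / √(k n)) = √(k n) * γ n := fun n => by
    rw [mul_div_left_comm, div_sqrt, mul_comm]
  have key := tendsto_mul_exp_neg_mul_sum_Icc_exp_sub (tendsto_nhdsWithin_iff.mpr ⟨hx0, hx_ne⟩)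
    (m := k) (by simpa only [hkx] using hkγ)
  refine key.congr fun n => ?_
  simp only [hkx, mul_div_assoc, neg_mul, div_div_eq_mul_div]
  ring

open Filter in
theorem geom_sum_leading_term (γ : ℕ → ℝ) (k : ℕ → ℕ)
    (hγpos : ∀ n, 0 < γ n) (hγ0 : Tendsto γ atTop (nhds 0))
    (hk : Tendsto k atTop atTop)
    (hkγ : Tendsto (fun n => Real.sqrt (k n) * γ n) atTop atTop) :
    Tendsto (fun n => (γ n / Real.sqrt (k n)) * Real.exp (-(Real.sqrt (k n)) * γ n) *
        ((∑ j ∈ Finset.Icc 1 (k n - 1), Real.exp (j * γ n / Real.sqrt (k n))) -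
          (Real.sqrt (k n) / γ n) * Real.exp (Real.sqrt (k n) * γ n)))
      atTop (nhds 0) :=
  geom_sum_leading_term_general γ k hγ0 hk hkγ
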